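/- Let d ≥ 1, let θ ∈ ℝ^d, let ε_1,…,ε_d be i.i.d. random variables with the standard Gumbel distribution, and let r ∈ {1,…,d}. Then P(θ_r + ε_r > θ_j + ε_j for all j ≠ r) = e^{θ_r} / Σ_{j=1}^d e^{θ_j} (the Gumbel-argmax, or softmax, reparameterization is exact). -/

import Mathlib

/-!
Condition on `ε_r = t`. The event then asks `ε_j < t + θ_r - θ_j` for every `j ≠ r`, which
has probability `∏_j F(t + θ_r - θ_j) = exp(-a e^{-t})` with `a = ∑_{j ≠ r} e^{θ_j - θ_r}`: the
Gumbel CDF `F(x) = exp(-e^{-x})` turns sums of shifts into products. Integrating against the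
Gumbel density leaves `∫ exp(-t - (1 + a) e^{-t}) dt = 1 / (1 + a)`, since
`b⁻¹ exp(-b e^{-t})` is an antiderivative of `exp(-t - b e^{-t})`.
-/

open MeasureTheory Real Filter Set Topology

section ExpSubMulExpNeg

variable {b : ℝ}

theorem hasDerivAt_inv_mul_exp_neg_mul_exp_neg (hb : b ≠ 0) (x : ℝ) :
    HasDerivAt (fun x => b⁻¹ * exp (-(b * exp (-x)))) (exp (-x - b * exp (-x))) x := by
  have hinner : HasDerivAt (fun x => -(b * exp (-x))) (b * exp (-x)) x := by
    simpa using ((hasDerivAt_neg x).exp.const_mul b).fun_neg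
  refine (hinner.exp.const_mul b⁻¹).congr_deriv ?_
  rw [sub_eq_neg_add, exp_add]
  field_simp

theorem tendsto_inv_mul_exp_neg_mul_exp_neg_atBot (hb : 0 < b) :
    Tendsto (fun x => b⁻¹ * exp (-(b * exp (-x)))) atBot (𝓝 0) := by
  have h : Tendsto (fun x => -(b * exp (-x))) atBot atBot :=
    tendsto_neg_atTop_atBot.comp
      ((tendsto_exp_atTop.comp tendsto_neg_atBot_atTop).const_mul_atTop hb)
  simpa using (tendsto_exp_atBot.comp h).const_mul b⁻¹

theorem tendsto_inv_mul_exp_neg_mul_exp_neg_atTop (b : ℝ) :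
    Tendsto (fun x => b⁻¹ * exp (-(b * exp (-x)))) atTop (𝓝 b⁻¹) := by
  have h : Tendsto (fun x => -(b * exp (-x))) atTop (𝓝 0) := by
    simpa using ((tendsto_exp_atBot.comp tendsto_neg_atTop_atBot).const_mul b).neg
  simpa using ((continuous_exp.tendsto 0).comp h).const_mul b⁻¹

theorem integrable_exp_sub_mul_exp_neg (hb : 0 < b) :
    Integrable fun x => exp (-x - b * exp (-x)) := by
  have hcont : Continuous fun x => exp (-x - b * exp (-x)) := by fun_prop
  refine integrable_of_intervalIntegral_norm_tendsto (b⁻¹ - 0)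
    (fun i => hcont.integrableOn_Ioc) tendsto_neg_atTop_atBot tendsto_id ?_
  have hFTC (i : ℝ) : ∫ x in -i..id i, ‖exp (-x - b * exp (-x))‖
      = b⁻¹ * exp (-(b * exp (-i))) - b⁻¹ * exp (-(b * exp (-(-i)))) := by
    simp only [norm_of_nonneg (exp_nonneg _), id]
    exact intervalIntegral.integral_eq_sub_of_hasDerivAt
      (fun x _ => hasDerivAt_inv_mul_exp_neg_mul_exp_neg hb.ne' x) (hcont.intervalIntegrable _ _)
  simp only [hFTC]
  exact (tendsto_inv_mul_exp_neg_mul_exp_neg_atTop b).sub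
    ((tendsto_inv_mul_exp_neg_mul_exp_neg_atBot hb).comp tendsto_neg_atTop_atBot)

theorem integral_exp_sub_mul_exp_neg (hb : 0 < b) :
    ∫ x, exp (-x - b * exp (-x)) = b⁻¹ := by
  simpa using integral_of_hasDerivAt_of_tendsto
    (hasDerivAt_inv_mul_exp_neg_mul_exp_neg hb.ne') (integrable_exp_sub_mul_exp_neg hb)
    (tendsto_inv_mul_exp_neg_mul_exp_neg_atBot hb) (tendsto_inv_mul_exp_neg_mul_exp_neg_atTop b)

theorem integral_Iic_exp_sub_mul_exp_neg (hb : 0 < b) (c : ℝ) :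
    ∫ x in Iic c, exp (-x - b * exp (-x)) = b⁻¹ * exp (-(b * exp (-c))) := by
  simpa using integral_Iic_of_hasDerivAt_of_tendsto'
    (fun x _ => hasDerivAt_inv_mul_exp_neg_mul_exp_neg hb.ne' x)
    (integrable_exp_sub_mul_exp_neg hb).integrableOn (tendsto_inv_mul_exp_neg_mul_exp_neg_atBot hb)

end ExpSubMulExpNeg

theorem prod_exp_neg_exp_neg_add {ι : Type*} (s : Finset ι) (c : ι → ℝ) (t : ℝ) :
    ∏ j ∈ s, exp (-exp (-(t + c j))) = exp (-((∑ j ∈ s, exp (-c j)) * exp (-t))) := by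
  rw [← exp_sum, Finset.sum_mul, ← Finset.sum_neg_distrib]
  congr 1
  refine Finset.sum_congr rfl fun j _ => ?_
  rw [← exp_add, neg_add, add_comm]

theorem measure_pi_setOf_forall_ne_lt {n : ℕ} (μ : Fin (n + 1) → Measure ℝ)
    [∀ i, SigmaFinite (μ i)] (θ : Fin (n + 1) → ℝ) (r : Fin (n + 1)) :
    Measure.pi μ {ε | ∀ j, j ≠ r → θ j + ε j < θ r + ε r}
      = ∫⁻ t, ∏ j, μ (r.succAbove j) (Iio (θ r + t - θ (r.succAbove j))) ∂μ r := by
  set T : Set (ℝ × (Fin n → ℝ)) := {p | ∀ j, θ (r.succAbove j) + p.2 j < θ r + p.1}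
  have hT : MeasurableSet T := by
    simp only [T, ofPred_forall]
    exact .iInter fun j => measurableSet_lt (by fun_prop) (by fun_prop)
  have hpre : MeasurableEquiv.piFinSuccAbove (fun _ => ℝ) r ⁻¹' T
      = {ε | ∀ j, j ≠ r → θ j + ε j < θ r + ε r} := by
    ext ε
    simp [T, Fin.forall_iff_succAbove r, Fin.succAbove_ne, Fin.removeNth]
  have hsection (t : ℝ) :
      Prod.mk t ⁻¹' T = univ.pi fun j => Iio (θ r + t - θ (r.succAbove j)) := by
    ext y
    simp only [T, mem_preimage, mem_ofPred_eq, mem_univ_pi, mem_Iio, lt_sub_iff_add_lt']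
  rw [← hpre, (measurePreserving_piFinSuccAbove μ r).measure_preimage_equiv,
    Measure.prod_apply hT]
  simp only [hsection, Measure.pi_pi]

noncomputable def gumbelMeasure : Measure ℝ :=
  volume.withDensity fun x => ENNReal.ofReal (exp (-x - exp (-x)))

theorem gumbelMeasure_Iio (c : ℝ) :
    gumbelMeasure (Iio c) = ENNReal.ofReal (exp (-exp (-c))) := by
  have h := integral_Iic_exp_sub_mul_exp_neg one_pos c
  simp only [one_mul, inv_one] at h
  rw [gumbelMeasure, withDensity_apply _ measurableSet_Iio,
    setLIntegral_congr Iio_ae_eq_Iic, ← h, ofReal_integral_eq_lintegral_ofReal]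
  · refine Integrable.integrableOn ?_
    simpa using integrable_exp_sub_mul_exp_neg (b := 1) one_pos
  · exact .of_forall fun _ => exp_nonneg _

theorem lintegral_exp_neg_mul_exp_neg_gumbelMeasure {a : ℝ} (ha : 0 ≤ a) :
    ∫⁻ t, ENNReal.ofReal (exp (-(a * exp (-t)))) ∂gumbelMeasure
      = ENNReal.ofReal (1 + a)⁻¹ := by
  have h1a : 0 < 1 + a := by linarith
  have hdensity (t : ℝ) :
      ENNReal.ofReal (exp (-t - exp (-t))) * ENNReal.ofReal (exp (-(a * exp (-t))))
        = ENNReal.ofReal (exp (-t - (1 + a) * exp (-t))) := by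
    rw [← ENNReal.ofReal_mul (exp_nonneg _), ← exp_add]
    ring_nf
  rw [gumbelMeasure, lintegral_withDensity_eq_lintegral_mul _ (by fun_prop) (by fun_prop)]
  simp only [Pi.mul_apply, hdensity]
  rw [← ofReal_integral_eq_lintegral_ofReal (integrable_exp_sub_mul_exp_neg h1a)
    (.of_forall fun _ => exp_nonneg _), integral_exp_sub_mul_exp_neg h1a]

instance : IsProbabilityMeasure gumbelMeasure where
  measure_univ := by
    simpa using lintegral_exp_neg_mul_exp_neg_gumbelMeasure le_rfl

theorem stmt14_general (d : ℕ) (θ : Fin d → ℝ) (r : Fin d)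
    (gumbel : Measure ℝ)
    (hgumbel : gumbel =
      volume.withDensity (fun x => ENNReal.ofReal (Real.exp (-x - Real.exp (-x))))) :
    (Measure.pi fun _ : Fin d => gumbel)
        {ε : Fin d → ℝ | ∀ j : Fin d, j ≠ r → θ j + ε j < θ r + ε r}
      = ENNReal.ofReal (Real.exp (θ r) / ∑ j : Fin d, Real.exp (θ j)) := by
  obtain ⟨n, rfl⟩ : ∃ n, d = n + 1 := Nat.exists_eq_succ_of_ne_zero r.pos.ne'
  obtain rfl : gumbel = gumbelMeasure := hgumbel
  set a := ∑ j, exp (-(θ r - θ (r.succAbove j)))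
  have hcdf (t : ℝ) : ∏ j, gumbelMeasure (Iio (θ r + t - θ (r.succAbove j)))
      = ENNReal.ofReal (exp (-(a * exp (-t)))) := by
    simp only [gumbelMeasure_Iio, add_comm (θ r) t, add_sub_assoc,
      ← ENNReal.ofReal_prod_of_nonneg fun _ _ => exp_nonneg _, prod_exp_neg_exp_neg_add]
    rfl
  have hsoftmax : (1 + a)⁻¹ = exp (θ r) / ∑ j, exp (θ j) := by
    have hsum : exp (θ r) + ∑ j, exp (θ (r.succAbove j)) = exp (θ r) * (1 + a) := by
      rw [mul_add, mul_one, Finset.mul_sum]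
      congr 1
      refine Finset.sum_congr rfl fun j _ => ?_
      rw [← exp_add]
      ring_nf
    rw [Fin.sum_univ_succAbove _ r, hsum, div_mul_cancel_left₀ (exp_ne_zero _)]
  rw [measure_pi_setOf_forall_ne_lt]
  simp only [hcdf]
  rw [lintegral_exp_neg_mul_exp_neg_gumbelMeasure (by positivity), hsoftmax]

/-- Exactness of the Gumbel-argmax (softmax) reparameterization: with `ε_1,…,ε_d`
i.i.d. standard Gumbel, `P(θ_r + ε_r > θ_j + ε_j ∀ j ≠ r) = e^{θ_r}/Σ_j e^{θ_j}`. -/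
theorem stmt14 (d : ℕ) (hd : 1 ≤ d) (θ : Fin d → ℝ) (r : Fin d)
    (gumbel : Measure ℝ)
    (hgumbel : gumbel =
      volume.withDensity (fun x => ENNReal.ofReal (Real.exp (-x - Real.exp (-x))))) :
    (Measure.pi fun _ : Fin d => gumbel)
        {ε : Fin d → ℝ | ∀ j : Fin d, j ≠ r → θ j + ε j < θ r + ε r}
      = ENNReal.ofReal (Real.exp (θ r) / ∑ j : Fin d, Real.exp (θ j)) :=
  stmt14_general d θ r gumbel hgumbel
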